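/- arXiv:1708.03746 — 7 statements merged into one kernel-verified Lean document; each statement's English description precedes it below -/
import Mathlib

section
/- If sequences â and b̂ of integers satisfy â(n+1) = 2â(n) + 2b̂(n) + 12 and b̂(n+1) = â(n) + 2b̂(n) for all n ≥ 1, then for all n ≥ 4, â(n) = 5â(n-1) - 6â(n-2) + 2â(n-3) and b̂(n) = 5b̂(n-1) - 6b̂(n-2) + 2b̂(n-3). -/
theorem stmt_4 (a b : ℕ → ℤ)
    (ha : ∀ n ≥ 1, a (n + 1) = 2 * a n + 2 * b n + 12)
    (hb : ∀ n ≥ 1, b (n + 1) = a n + 2 * b n) :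
    ∀ n ≥ 4, a n = 5 * a (n - 1) - 6 * a (n - 2) + 2 * a (n - 3) ∧
             b n = 5 * b (n - 1) - 6 * b (n - 2) + 2 * b (n - 3) := by
  intro n hn
  obtain ⟨k, rfl⟩ : ∃ k, n = k + 4 := ⟨n - 4, by omega⟩
  have h1 := ha (k + 1) (by omega)
  have h2 := ha (k + 2) (by omega)
  have h3 := ha (k + 3) (by omega)
  have g1 := hb (k + 1) (by omega)
  have g2 := hb (k + 2) (by omega)
  have g3 := hb (k + 3) (by omega)
  have e1 : k + 4 - 1 = k + 3 := by omega
  have e2 : k + 4 - 2 = k + 2 := by omega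
  have e3 : k + 4 - 3 = k + 1 := by omega
  rw [e1, e2, e3]
  constructor <;> linarith
end

section
/- Let M1 be the 6×6 rational matrix with rows (1,1,0,0,0,3/2), (1,2,0,0,0,0), (2/3,0,1,2/3,0,0), (0,1,3/2,2,5/2,0), (0,0,3,4,6,0), (0,0,0,0,0,1). Then M1 satisfies the polynomial identity M1^5 - 12·M1^4 + 37·M1^3 - 37·M1^2 + 12·M1 - I = 0. -/
open Matrix

theorem Matrix.one_fin_six {α : Type*} [Zero α] [One α] :
    (1 : Matrix (Fin 6) (Fin 6) α) =
      !![1, 0, 0, 0, 0, 0;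
         0, 1, 0, 0, 0, 0;
         0, 0, 1, 0, 0, 0;
         0, 0, 0, 1, 0, 0;
         0, 0, 0, 0, 1, 0;
         0, 0, 0, 0, 0, 1] := by
  ext i j
  fin_cases i <;> fin_cases j <;> rfl

theorem stmt_5 :
    let M1 : Matrix (Fin 6) (Fin 6) ℚ :=
      !![1, 1, 0, 0, 0, 3/2;
         1, 2, 0, 0, 0, 0;
         2/3, 0, 1, 2/3, 0, 0;
         0, 1, 3/2, 2, 5/2, 0;
         0, 0, 3, 4, 6, 0;
         0, 0, 0, 0, 0, 1]
    M1^5 - 12 * M1^4 + 37 * M1^3 - 37 * M1^2 + 12 * M1 - 1 = 0 := by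
  intro M1
  rw [sub_eq_zero, one_fin_six]
  -- The numerals 12 and 37 are scalar matrices; as `ℕ`-multiples they are pushed into the entries.
  simp only [← Nat.ofNat_nsmul_eq_mul]
  norm_num [M1, pow_succ, cons_mul, cons_vecMul, empty_mul]
end

section
/- With the sequences a,...,k,v defined by the vertex-growing recurrence system of the hyperbolic Pascal simplex (with zero initial values except v(1)=4), each of the sequences a,b,c,d,e satisfies, for all n ≥ 6, x(n) = 12x(n-1) - 37x(n-2) + 37x(n-3) - 12x(n-4) + x(n-5). -/
theorem stmt_8 (a b c d e f g h k v : ℕ → ℚ)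
    (ha1 : a 1 = 0) (hb1 : b 1 = 0) (hc1 : c 1 = 0) (hd1 : d 1 = 0)
    (he1 : e 1 = 0) (hf1 : f 1 = 0) (hg1 : g 1 = 0) (hh1 : h 1 = 0)
    (hk1 : k 1 = 0) (hv1 : v 1 = 4)
    (ha : ∀ n ≥ 1, a (n + 1) = (2 * a n + 2 * b n + 3 * v n) / 2)
    (hb : ∀ n ≥ 1, b (n + 1) = a n + 2 * b n)
    (hc : ∀ n ≥ 1, c (n + 1) = (2 * a n + 3 * c n + 2 * d n) / 3)
    (hd : ∀ n ≥ 1, d (n + 1) = (2 * b n + 3 * c n + 4 * d n + 5 * e n) / 2)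
    (he : ∀ n ≥ 1, e (n + 1) = 3 * c n + 4 * d n + 6 * e n)
    (hf : ∀ n ≥ 1, f (n + 1) = (c n + 4 * f n + 2 * g n) / 4)
    (hg : ∀ n ≥ 1, g (n + 1) = (d n + 6 * f n + 6 * g n + 5 * h n) / 3)
    (hh : ∀ n ≥ 1, h (n + 1) = (e n + 12 * f n + 12 * g n + 12 * h n + 12 * k n) / 2)
    (hk : ∀ n ≥ 1, k (n + 1) = 94 * f n + 97 * g n + 101 * h n + 107 * k n)
    (hv : ∀ n ≥ 1, v (n + 1) = v n) :
    ∀ x ∈ ({a, b, c, d, e} : Set (ℕ → ℚ)), ∀ n ≥ 6,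
      x n = 12 * x (n - 1) - 37 * x (n - 2) + 37 * x (n - 3)
            - 12 * x (n - 4) + x (n - 5) := by
  have key : ∀ m, 1 ≤ m →
      (a (m+5) = 12*a (m+4) - 37*a (m+3) + 37*a (m+2) - 12*a (m+1) + a m) ∧
      (b (m+5) = 12*b (m+4) - 37*b (m+3) + 37*b (m+2) - 12*b (m+1) + b m) ∧
      (c (m+5) = 12*c (m+4) - 37*c (m+3) + 37*c (m+2) - 12*c (m+1) + c m) ∧
      (d (m+5) = 12*d (m+4) - 37*d (m+3) + 37*d (m+2) - 12*d (m+1) + d m) ∧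
      (e (m+5) = 12*e (m+4) - 37*e (m+3) + 37*e (m+2) - 12*e (m+1) + e m) := by
    intro m hm
    have Ha0 := ha m hm
    have Hb0 := hb m hm
    have Hc0 := hc m hm
    have Hd0 := hd m hm
    have He0 := he m hm
    have Hv0 := hv m hm
    have Ha1 := ha (m+1) (by omega)
    have Hb1 := hb (m+1) (by omega)
    have Hc1 := hc (m+1) (by omega)
    have Hd1 := hd (m+1) (by omega)
    have He1 := he (m+1) (by omega)
    have Hv1 := hv (m+1) (by omega)
    have Ha2 := ha (m+2) (by omega)
    have Hb2 := hb (m+2) (by omega)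
    have Hc2 := hc (m+2) (by omega)
    have Hd2 := hd (m+2) (by omega)
    have He2 := he (m+2) (by omega)
    have Hv2 := hv (m+2) (by omega)
    have Ha3 := ha (m+3) (by omega)
    have Hb3 := hb (m+3) (by omega)
    have Hc3 := hc (m+3) (by omega)
    have Hd3 := hd (m+3) (by omega)
    have He3 := he (m+3) (by omega)
    have Hv3 := hv (m+3) (by omega)
    have Ha4 := ha (m+4) (by omega)
    have Hb4 := hb (m+4) (by omega)
    have Hc4 := hc (m+4) (by omega)
    have Hd4 := hd (m+4) (by omega)
    have He4 := he (m+4) (by omega)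
    have Hv4 := hv (m+4) (by omega)
    refine ⟨by linarith, by linarith, by linarith, by linarith, by linarith⟩
  intro x hx n hn
  obtain ⟨m, hm1, rfl⟩ : ∃ m, 1 ≤ m ∧ n = m + 5 := ⟨n - 5, by omega, by omega⟩
  have e1 : m + 5 - 1 = m + 4 := by omega
  have e2 : m + 5 - 2 = m + 3 := by omega
  have e3 : m + 5 - 3 = m + 2 := by omega
  have e4 : m + 5 - 4 = m + 1 := by omega
  have e5 : m + 5 - 5 = m := by omega
  rw [e1, e2, e3, e4, e5]
  simp only [Set.mem_insert_iff, Set.mem_singleton_iff] at hx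
  rcases hx with rfl | rfl | rfl | rfl | rfl
  · exact (key m hm1).1
  · exact (key m hm1).2.1
  · exact (key m hm1).2.2.1
  · exact (key m hm1).2.2.2.1
  · exact (key m hm1).2.2.2.2
end

section
/- With the sequences a,...,k,v defined by the vertex-growing recurrence system of the hyperbolic Pascal simplex (zero initial values except v(1)=4), the total sequence s(n) = a(n)+b(n)+c(n)+d(n)+e(n)+f(n)+g(n)+h(n)+k(n)+4 satisfies, for all n ≥ 10, s(n) = 128s(n-1) - 1795s(n-2) + 8837s(n-3) - 19239s(n-4) + 19239s(n-5) - 8837s(n-6) + 1795s(n-7) - 128s(n-8) + s(n-9). -/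
set_option maxHeartbeats 2000000

theorem stmt_9 (a b c d e f g h k v : ℕ → ℚ)
    (ha1 : a 1 = 0) (hb1 : b 1 = 0) (hc1 : c 1 = 0) (hd1 : d 1 = 0)
    (he1 : e 1 = 0) (hf1 : f 1 = 0) (hg1 : g 1 = 0) (hh1 : h 1 = 0)
    (hk1 : k 1 = 0) (hv1 : v 1 = 4)
    (ha : ∀ n ≥ 1, a (n + 1) = (2 * a n + 2 * b n + 3 * v n) / 2)
    (hb : ∀ n ≥ 1, b (n + 1) = a n + 2 * b n)
    (hc : ∀ n ≥ 1, c (n + 1) = (2 * a n + 3 * c n + 2 * d n) / 3)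
    (hd : ∀ n ≥ 1, d (n + 1) = (2 * b n + 3 * c n + 4 * d n + 5 * e n) / 2)
    (he : ∀ n ≥ 1, e (n + 1) = 3 * c n + 4 * d n + 6 * e n)
    (hf : ∀ n ≥ 1, f (n + 1) = (c n + 4 * f n + 2 * g n) / 4)
    (hg : ∀ n ≥ 1, g (n + 1) = (d n + 6 * f n + 6 * g n + 5 * h n) / 3)
    (hh : ∀ n ≥ 1, h (n + 1) = (e n + 12 * f n + 12 * g n + 12 * h n + 12 * k n) / 2)
    (hk : ∀ n ≥ 1, k (n + 1) = 94 * f n + 97 * g n + 101 * h n + 107 * k n)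
    (hv : ∀ n ≥ 1, v (n + 1) = v n)
    (s : ℕ → ℚ)
    (hs : ∀ n, s n = a n + b n + c n + d n + e n + f n + g n + h n + k n + 4) :
    ∀ n ≥ 10,
      s n = 128 * s (n - 1) - 1795 * s (n - 2) + 8837 * s (n - 3)
        - 19239 * s (n - 4) + 19239 * s (n - 5) - 8837 * s (n - 6)
        + 1795 * s (n - 7) - 128 * s (n - 8) + s (n - 9) := by
  have ha2 : a 2 = 6 := by
    have t := ha 1 (by norm_num)
    norm_num [ha1, hb1, hv1] at t
    linarith [t]
  have hb2 : b 2 = 0 := by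
    have t := hb 1 (by norm_num)
    norm_num [ha1, hb1] at t
    linarith [t]
  have hc2 : c 2 = 0 := by
    have t := hc 1 (by norm_num)
    norm_num [ha1, hc1, hd1] at t
    linarith [t]
  have hd2 : d 2 = 0 := by
    have t := hd 1 (by norm_num)
    norm_num [hb1, hc1, hd1, he1] at t
    linarith [t]
  have he2 : e 2 = 0 := by
    have t := he 1 (by norm_num)
    norm_num [hc1, hd1, he1] at t
    linarith [t]
  have hf2 : f 2 = 0 := by
    have t := hf 1 (by norm_num)
    norm_num [hc1, hf1, hg1] at t
    linarith [t]
  have hg2 : g 2 = 0 := by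
    have t := hg 1 (by norm_num)
    norm_num [hd1, hf1, hg1, hh1] at t
    linarith [t]
  have hh2 : h 2 = 0 := by
    have t := hh 1 (by norm_num)
    norm_num [he1, hf1, hg1, hh1, hk1] at t
    linarith [t]
  have hk2 : k 2 = 0 := by
    have t := hk 1 (by norm_num)
    norm_num [hf1, hg1, hh1, hk1] at t
    linarith [t]
  have hv2 : v 2 = 4 := by
    have t := hv 1 (by norm_num)
    norm_num [hv1] at t
    linarith [t]
  have ha3 : a 3 = 12 := by
    have t := ha 2 (by norm_num)
    norm_num [ha2, hb2, hv2] at t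
    linarith [t]
  have hb3 : b 3 = 6 := by
    have t := hb 2 (by norm_num)
    norm_num [ha2, hb2] at t
    linarith [t]
  have hc3 : c 3 = 4 := by
    have t := hc 2 (by norm_num)
    norm_num [ha2, hc2, hd2] at t
    linarith [t]
  have hd3 : d 3 = 0 := by
    have t := hd 2 (by norm_num)
    norm_num [hb2, hc2, hd2, he2] at t
    linarith [t]
  have he3 : e 3 = 0 := by
    have t := he 2 (by norm_num)
    norm_num [hc2, hd2, he2] at t
    linarith [t]
  have hf3 : f 3 = 0 := by
    have t := hf 2 (by norm_num)
    norm_num [hc2, hf2, hg2] at t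
    linarith [t]
  have hg3 : g 3 = 0 := by
    have t := hg 2 (by norm_num)
    norm_num [hd2, hf2, hg2, hh2] at t
    linarith [t]
  have hh3 : h 3 = 0 := by
    have t := hh 2 (by norm_num)
    norm_num [he2, hf2, hg2, hh2, hk2] at t
    linarith [t]
  have hk3 : k 3 = 0 := by
    have t := hk 2 (by norm_num)
    norm_num [hf2, hg2, hh2, hk2] at t
    linarith [t]
  have hv3 : v 3 = 4 := by
    have t := hv 2 (by norm_num)
    norm_num [hv2] at t
    linarith [t]
  have ha4 : a 4 = 24 := by
    have t := ha 3 (by norm_num)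
    norm_num [ha3, hb3, hv3] at t
    linarith [t]
  have hb4 : b 4 = 24 := by
    have t := hb 3 (by norm_num)
    norm_num [ha3, hb3] at t
    linarith [t]
  have hc4 : c 4 = 12 := by
    have t := hc 3 (by norm_num)
    norm_num [ha3, hc3, hd3] at t
    linarith [t]
  have hd4 : d 4 = 12 := by
    have t := hd 3 (by norm_num)
    norm_num [hb3, hc3, hd3, he3] at t
    linarith [t]
  have he4 : e 4 = 12 := by
    have t := he 3 (by norm_num)
    norm_num [hc3, hd3, he3] at t
    linarith [t]
  have hf4 : f 4 = 1 := by
    have t := hf 3 (by norm_num)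
    norm_num [hc3, hf3, hg3] at t
    linarith [t]
  have hg4 : g 4 = 0 := by
    have t := hg 3 (by norm_num)
    norm_num [hd3, hf3, hg3, hh3] at t
    linarith [t]
  have hh4 : h 4 = 0 := by
    have t := hh 3 (by norm_num)
    norm_num [he3, hf3, hg3, hh3, hk3] at t
    linarith [t]
  have hk4 : k 4 = 0 := by
    have t := hk 3 (by norm_num)
    norm_num [hf3, hg3, hh3, hk3] at t
    linarith [t]
  have hv4 : v 4 = 4 := by
    have t := hv 3 (by norm_num)
    norm_num [hv3] at t
    linarith [t]
  have ha5 : a 5 = 54 := by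
    have t := ha 4 (by norm_num)
    norm_num [ha4, hb4, hv4] at t
    linarith [t]
  have hb5 : b 5 = 72 := by
    have t := hb 4 (by norm_num)
    norm_num [ha4, hb4] at t
    linarith [t]
  have hc5 : c 5 = 36 := by
    have t := hc 4 (by norm_num)
    norm_num [ha4, hc4, hd4] at t
    linarith [t]
  have hd5 : d 5 = 96 := by
    have t := hd 4 (by norm_num)
    norm_num [hb4, hc4, hd4, he4] at t
    linarith [t]
  have he5 : e 5 = 156 := by
    have t := he 4 (by norm_num)
    norm_num [hc4, hd4, he4] at t
    linarith [t]
  have hf5 : f 5 = 4 := by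
    have t := hf 4 (by norm_num)
    norm_num [hc4, hf4, hg4] at t
    linarith [t]
  have hg5 : g 5 = 6 := by
    have t := hg 4 (by norm_num)
    norm_num [hd4, hf4, hg4, hh4] at t
    linarith [t]
  have hh5 : h 5 = 12 := by
    have t := hh 4 (by norm_num)
    norm_num [he4, hf4, hg4, hh4, hk4] at t
    linarith [t]
  have hk5 : k 5 = 94 := by
    have t := hk 4 (by norm_num)
    norm_num [hf4, hg4, hh4, hk4] at t
    linarith [t]
  have hv5 : v 5 = 4 := by
    have t := hv 4 (by norm_num)
    norm_num [hv4] at t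
    linarith [t]
  have ha6 : a 6 = 132 := by
    have t := ha 5 (by norm_num)
    norm_num [ha5, hb5, hv5] at t
    linarith [t]
  have hb6 : b 6 = 198 := by
    have t := hb 5 (by norm_num)
    norm_num [ha5, hb5] at t
    linarith [t]
  have hc6 : c 6 = 136 := by
    have t := hc 5 (by norm_num)
    norm_num [ha5, hc5, hd5] at t
    linarith [t]
  have hd6 : d 6 = 708 := by
    have t := hd 5 (by norm_num)
    norm_num [hb5, hc5, hd5, he5] at t
    linarith [t]
  have he6 : e 6 = 1428 := by
    have t := he 5 (by norm_num)
    norm_num [hc5, hd5, he5] at t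
    linarith [t]
  have hf6 : f 6 = 16 := by
    have t := hf 5 (by norm_num)
    norm_num [hc5, hf5, hg5] at t
    linarith [t]
  have hg6 : g 6 = 72 := by
    have t := hg 5 (by norm_num)
    norm_num [hd5, hf5, hg5, hh5] at t
    linarith [t]
  have hh6 : h 6 = 774 := by
    have t := hh 5 (by norm_num)
    norm_num [he5, hf5, hg5, hh5, hk5] at t
    linarith [t]
  have hk6 : k 6 = 12228 := by
    have t := hk 5 (by norm_num)
    norm_num [hf5, hg5, hh5, hk5] at t
    linarith [t]
  have hv6 : v 6 = 4 := by
    have t := hv 5 (by norm_num)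
    norm_num [hv5] at t
    linarith [t]
  have ha7 : a 7 = 336 := by
    have t := ha 6 (by norm_num)
    norm_num [ha6, hb6, hv6] at t
    linarith [t]
  have hb7 : b 7 = 528 := by
    have t := hb 6 (by norm_num)
    norm_num [ha6, hb6] at t
    linarith [t]
  have hc7 : c 7 = 696 := by
    have t := hc 6 (by norm_num)
    norm_num [ha6, hc6, hd6] at t
    linarith [t]
  have hd7 : d 7 = 5388 := by
    have t := hd 6 (by norm_num)
    norm_num [hb6, hc6, hd6, he6] at t
    linarith [t]
  have he7 : e 7 = 11808 := by
    have t := he 6 (by norm_num)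
    norm_num [hc6, hd6, he6] at t
    linarith [t]
  have hf7 : f 7 = 86 := by
    have t := hf 6 (by norm_num)
    norm_num [hc6, hf6, hg6] at t
    linarith [t]
  have hg7 : g 7 = 1702 := by
    have t := hg 6 (by norm_num)
    norm_num [hd6, hf6, hg6, hh6] at t
    linarith [t]
  have hh7 : h 7 = 79254 := by
    have t := hh 6 (by norm_num)
    norm_num [he6, hf6, hg6, hh6, hk6] at t
    linarith [t]
  have hk7 : k 7 = 1395058 := by
    have t := hk 6 (by norm_num)
    norm_num [hf6, hg6, hh6, hk6] at t
    linarith [t]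
  have hv7 : v 7 = 4 := by
    have t := hv 6 (by norm_num)
    norm_num [hv6] at t
    linarith [t]
  have ha8 : a 8 = 870 := by
    have t := ha 7 (by norm_num)
    norm_num [ha7, hb7, hv7] at t
    linarith [t]
  have hb8 : b 8 = 1392 := by
    have t := hb 7 (by norm_num)
    norm_num [ha7, hb7] at t
    linarith [t]
  have hc8 : c 8 = 4512 := by
    have t := hc 7 (by norm_num)
    norm_num [ha7, hc7, hd7] at t
    linarith [t]
  have hd8 : d 8 = 41868 := by
    have t := hd 7 (by norm_num)
    norm_num [hb7, hc7, hd7, he7] at t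
    linarith [t]
  have he8 : e 8 = 94488 := by
    have t := he 7 (by norm_num)
    norm_num [hc7, hd7, he7] at t
    linarith [t]
  have hf8 : f 8 = 1111 := by
    have t := hf 7 (by norm_num)
    norm_num [hc7, hf7, hg7] at t
    linarith [t]
  have hg8 : g 8 = 137462 := by
    have t := hg 7 (by norm_num)
    norm_num [hd7, hf7, hg7, hh7] at t
    linarith [t]
  have hh8 : h 8 = 8862504 := by
    have t := hh 7 (by norm_num)
    norm_num [he7, hf7, hg7, hh7, hk7] at t
    linarith [t]
  have hk8 : k 8 = 157449038 := by
    have t := hk 7 (by norm_num)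
    norm_num [hf7, hg7, hh7, hk7] at t
    linarith [t]
  have hv8 : v 8 = 4 := by
    have t := hv 7 (by norm_num)
    norm_num [hv7] at t
    linarith [t]
  have ha9 : a 9 = 2268 := by
    have t := ha 8 (by norm_num)
    norm_num [ha8, hb8, hv8] at t
    linarith [t]
  have hb9 : b 9 = 3654 := by
    have t := hb 8 (by norm_num)
    norm_num [ha8, hb8] at t
    linarith [t]
  have hc9 : c 9 = 33004 := by
    have t := hc 8 (by norm_num)
    norm_num [ha8, hc8, hd8] at t
    linarith [t]
  have hd9 : d 9 = 328116 := by
    have t := hd 8 (by norm_num)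
    norm_num [hb8, hc8, hd8, he8] at t
    linarith [t]
  have he9 : e 9 = 747936 := by
    have t := he 8 (by norm_num)
    norm_num [hc8, hd8, he8] at t
    linarith [t]
  have hf9 : f 9 = 70970 := by
    have t := hf 8 (by norm_num)
    norm_num [hc8, hf8, hg8] at t
    linarith [t]
  have hg9 : g 9 = 15061942 := by
    have t := hg 8 (by norm_num)
    norm_num [hd8, hf8, hg8, hh8] at t
    linarith [t]
  have hh9 : h 9 = 998747934 := by
    have t := hh 8 (by norm_num)
    norm_num [he8, hf8, hg8, hh8, hk8] at t
    linarith [t]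
  have hk9 : k 9 = 17755598218 := by
    have t := hk 8 (by norm_num)
    norm_num [hf8, hg8, hh8, hk8] at t
    linarith [t]
  have hv9 : v 9 = 4 := by
    have t := hv 8 (by norm_num)
    norm_num [hv8] at t
    linarith [t]
  have ha10 : a 10 = 5928 := by
    have t := ha 9 (by norm_num)
    norm_num [ha9, hb9, hv9] at t
    linarith [t]
  have hb10 : b 10 = 9576 := by
    have t := hb 9 (by norm_num)
    norm_num [ha9, hb9] at t
    linarith [t]
  have hc10 : c 10 = 253260 := by
    have t := hc 9 (by norm_num)
    norm_num [ha9, hc9, hd9] at t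
    linarith [t]
  have hd10 : d 10 = 2579232 := by
    have t := hd 9 (by norm_num)
    norm_num [hb9, hc9, hd9, he9] at t
    linarith [t]
  have he10 : e 10 = 5899092 := by
    have t := he 9 (by norm_num)
    norm_num [hc9, hd9, he9] at t
    linarith [t]
  have hf10 : f 10 = 7610192 := by
    have t := hf 9 (by norm_num)
    norm_num [hc9, hf9, hg9] at t
    linarith [t]
  have hg10 : g 10 = 1694955086 := by
    have t := hg 9 (by norm_num)
    norm_num [hd9, hf9, hg9, hh9] at t
    linarith [t]
  have hh10 : h 10 = 112617248352 := by
    have t := hh 9 (by norm_num)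
    norm_num [he9, hf9, hg9, hh9, hk9] at t
    linarith [t]
  have hk10 : k 10 = 2002190230214 := by
    have t := hk 9 (by norm_num)
    norm_num [hf9, hg9, hh9, hk9] at t
    linarith [t]
  have hv10 : v 10 = 4 := by
    have t := hv 9 (by norm_num)
    norm_num [hv9] at t
    linarith [t]
  have key : ∀ n, 1 ≤ n → ((a (n + 9) = 128 * a (n + 8) - 1795 * a (n + 7) + 8837 * a (n + 6) - 19239 * a (n + 5) + 19239 * a (n + 4) - 8837 * a (n + 3) + 1795 * a (n + 2) - 128 * a (n + 1) + a (n)) ∧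
      (b (n + 9) = 128 * b (n + 8) - 1795 * b (n + 7) + 8837 * b (n + 6) - 19239 * b (n + 5) + 19239 * b (n + 4) - 8837 * b (n + 3) + 1795 * b (n + 2) - 128 * b (n + 1) + b (n)) ∧
      (c (n + 9) = 128 * c (n + 8) - 1795 * c (n + 7) + 8837 * c (n + 6) - 19239 * c (n + 5) + 19239 * c (n + 4) - 8837 * c (n + 3) + 1795 * c (n + 2) - 128 * c (n + 1) + c (n)) ∧
      (d (n + 9) = 128 * d (n + 8) - 1795 * d (n + 7) + 8837 * d (n + 6) - 19239 * d (n + 5) + 19239 * d (n + 4) - 8837 * d (n + 3) + 1795 * d (n + 2) - 128 * d (n + 1) + d (n)) ∧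
      (e (n + 9) = 128 * e (n + 8) - 1795 * e (n + 7) + 8837 * e (n + 6) - 19239 * e (n + 5) + 19239 * e (n + 4) - 8837 * e (n + 3) + 1795 * e (n + 2) - 128 * e (n + 1) + e (n)) ∧
      (f (n + 9) = 128 * f (n + 8) - 1795 * f (n + 7) + 8837 * f (n + 6) - 19239 * f (n + 5) + 19239 * f (n + 4) - 8837 * f (n + 3) + 1795 * f (n + 2) - 128 * f (n + 1) + f (n)) ∧
      (g (n + 9) = 128 * g (n + 8) - 1795 * g (n + 7) + 8837 * g (n + 6) - 19239 * g (n + 5) + 19239 * g (n + 4) - 8837 * g (n + 3) + 1795 * g (n + 2) - 128 * g (n + 1) + g (n)) ∧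
      (h (n + 9) = 128 * h (n + 8) - 1795 * h (n + 7) + 8837 * h (n + 6) - 19239 * h (n + 5) + 19239 * h (n + 4) - 8837 * h (n + 3) + 1795 * h (n + 2) - 128 * h (n + 1) + h (n)) ∧
      (k (n + 9) = 128 * k (n + 8) - 1795 * k (n + 7) + 8837 * k (n + 6) - 19239 * k (n + 5) + 19239 * k (n + 4) - 8837 * k (n + 3) + 1795 * k (n + 2) - 128 * k (n + 1) + k (n)) ∧
      (v (n + 9) = 128 * v (n + 8) - 1795 * v (n + 7) + 8837 * v (n + 6) - 19239 * v (n + 5) + 19239 * v (n + 4) - 8837 * v (n + 3) + 1795 * v (n + 2) - 128 * v (n + 1) + v (n))) := by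
    intro n hn
    induction n, hn using Nat.le_induction with
    | base =>
      refine ⟨?_,?_,?_,?_,?_,?_,?_,?_,?_,?_⟩ <;> norm_num [ha1, ha2, ha3, ha4, ha5, ha6, ha7, ha8, ha9, ha10, hb1, hb2, hb3, hb4, hb5, hb6, hb7, hb8, hb9, hb10, hc1, hc2, hc3, hc4, hc5, hc6, hc7, hc8, hc9, hc10, hd1, hd2, hd3, hd4, hd5, hd6, hd7, hd8, hd9, hd10, he1, he2, he3, he4, he5, he6, he7, he8, he9, he10, hf1, hf2, hf3, hf4, hf5, hf6, hf7, hf8, hf9, hf10, hg1, hg2, hg3, hg4, hg5, hg6, hg7, hg8, hg9, hg10, hh1, hh2, hh3, hh4, hh5, hh6, hh7, hh8, hh9, hh10, hk1, hk2, hk3, hk4, hk5, hk6, hk7, hk8, hk9, hk10, hv1, hv2, hv3, hv4, hv5, hv6, hv7, hv8, hv9, hv10]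
    | succ n hn IH =>
      obtain ⟨Ra,Rb,Rc,Rd,Re,Rf,Rg,Rh,Rk,Rv⟩ := IH
      have Ha0 := ha n (by omega)
      have Ha1 := ha (n + 1) (by omega)
      have Ha2 := ha (n + 2) (by omega)
      have Ha3 := ha (n + 3) (by omega)
      have Ha4 := ha (n + 4) (by omega)
      have Ha5 := ha (n + 5) (by omega)
      have Ha6 := ha (n + 6) (by omega)
      have Ha7 := ha (n + 7) (by omega)
      have Ha8 := ha (n + 8) (by omega)
      have Ha9 := ha (n + 9) (by omega)
      have Hb0 := hb n (by omega)
      have Hb1 := hb (n + 1) (by omega)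
      have Hb2 := hb (n + 2) (by omega)
      have Hb3 := hb (n + 3) (by omega)
      have Hb4 := hb (n + 4) (by omega)
      have Hb5 := hb (n + 5) (by omega)
      have Hb6 := hb (n + 6) (by omega)
      have Hb7 := hb (n + 7) (by omega)
      have Hb8 := hb (n + 8) (by omega)
      have Hb9 := hb (n + 9) (by omega)
      have Hc0 := hc n (by omega)
      have Hc1 := hc (n + 1) (by omega)
      have Hc2 := hc (n + 2) (by omega)
      have Hc3 := hc (n + 3) (by omega)
      have Hc4 := hc (n + 4) (by omega)
      have Hc5 := hc (n + 5) (by omega)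
      have Hc6 := hc (n + 6) (by omega)
      have Hc7 := hc (n + 7) (by omega)
      have Hc8 := hc (n + 8) (by omega)
      have Hc9 := hc (n + 9) (by omega)
      have Hd0 := hd n (by omega)
      have Hd1 := hd (n + 1) (by omega)
      have Hd2 := hd (n + 2) (by omega)
      have Hd3 := hd (n + 3) (by omega)
      have Hd4 := hd (n + 4) (by omega)
      have Hd5 := hd (n + 5) (by omega)
      have Hd6 := hd (n + 6) (by omega)
      have Hd7 := hd (n + 7) (by omega)
      have Hd8 := hd (n + 8) (by omega)
      have Hd9 := hd (n + 9) (by omega)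
      have He0 := he n (by omega)
      have He1 := he (n + 1) (by omega)
      have He2 := he (n + 2) (by omega)
      have He3 := he (n + 3) (by omega)
      have He4 := he (n + 4) (by omega)
      have He5 := he (n + 5) (by omega)
      have He6 := he (n + 6) (by omega)
      have He7 := he (n + 7) (by omega)
      have He8 := he (n + 8) (by omega)
      have He9 := he (n + 9) (by omega)
      have Hf0 := hf n (by omega)
      have Hf1 := hf (n + 1) (by omega)
      have Hf2 := hf (n + 2) (by omega)
      have Hf3 := hf (n + 3) (by omega)
      have Hf4 := hf (n + 4) (by omega)
      have Hf5 := hf (n + 5) (by omega)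
      have Hf6 := hf (n + 6) (by omega)
      have Hf7 := hf (n + 7) (by omega)
      have Hf8 := hf (n + 8) (by omega)
      have Hf9 := hf (n + 9) (by omega)
      have Hg0 := hg n (by omega)
      have Hg1 := hg (n + 1) (by omega)
      have Hg2 := hg (n + 2) (by omega)
      have Hg3 := hg (n + 3) (by omega)
      have Hg4 := hg (n + 4) (by omega)
      have Hg5 := hg (n + 5) (by omega)
      have Hg6 := hg (n + 6) (by omega)
      have Hg7 := hg (n + 7) (by omega)
      have Hg8 := hg (n + 8) (by omega)
      have Hg9 := hg (n + 9) (by omega)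
      have Hh0 := hh n (by omega)
      have Hh1 := hh (n + 1) (by omega)
      have Hh2 := hh (n + 2) (by omega)
      have Hh3 := hh (n + 3) (by omega)
      have Hh4 := hh (n + 4) (by omega)
      have Hh5 := hh (n + 5) (by omega)
      have Hh6 := hh (n + 6) (by omega)
      have Hh7 := hh (n + 7) (by omega)
      have Hh8 := hh (n + 8) (by omega)
      have Hh9 := hh (n + 9) (by omega)
      have Hk0 := hk n (by omega)
      have Hk1 := hk (n + 1) (by omega)
      have Hk2 := hk (n + 2) (by omega)
      have Hk3 := hk (n + 3) (by omega)
      have Hk4 := hk (n + 4) (by omega)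
      have Hk5 := hk (n + 5) (by omega)
      have Hk6 := hk (n + 6) (by omega)
      have Hk7 := hk (n + 7) (by omega)
      have Hk8 := hk (n + 8) (by omega)
      have Hk9 := hk (n + 9) (by omega)
      have Hv0 := hv n (by omega)
      have Hv1 := hv (n + 1) (by omega)
      have Hv2 := hv (n + 2) (by omega)
      have Hv3 := hv (n + 3) (by omega)
      have Hv4 := hv (n + 4) (by omega)
      have Hv5 := hv (n + 5) (by omega)
      have Hv6 := hv (n + 6) (by omega)
      have Hv7 := hv (n + 7) (by omega)
      have Hv8 := hv (n + 8) (by omega)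
      have Hv9 := hv (n + 9) (by omega)
      simp only [Nat.add_assoc, Nat.reduceAdd] at Ha0 Ha1 Ha2 Ha3 Ha4 Ha5 Ha6 Ha7 Ha8 Ha9 Hb0 Hb1 Hb2 Hb3 Hb4 Hb5 Hb6 Hb7 Hb8 Hb9 Hc0 Hc1 Hc2 Hc3 Hc4 Hc5 Hc6 Hc7 Hc8 Hc9 Hd0 Hd1 Hd2 Hd3 Hd4 Hd5 Hd6 Hd7 Hd8 Hd9 He0 He1 He2 He3 He4 He5 He6 He7 He8 He9 Hf0 Hf1 Hf2 Hf3 Hf4 Hf5 Hf6 Hf7 Hf8 Hf9 Hg0 Hg1 Hg2 Hg3 Hg4 Hg5 Hg6 Hg7 Hg8 Hg9 Hh0 Hh1 Hh2 Hh3 Hh4 Hh5 Hh6 Hh7 Hh8 Hh9 Hk0 Hk1 Hk2 Hk3 Hk4 Hk5 Hk6 Hk7 Hk8 Hk9 Hv0 Hv1 Hv2 Hv3 Hv4 Hv5 Hv6 Hv7 Hv8 Hv9 ⊢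
      refine ⟨?_,?_,?_,?_,?_,?_,?_,?_,?_,?_⟩
      · linear_combination Ha9 + 1 * Ra + 1 * Rb + (3/2 : ℚ) * Rv - (128 * Ha8 - 1795 * Ha7 + 8837 * Ha6 - 19239 * Ha5 + 19239 * Ha4 - 8837 * Ha3 + 1795 * Ha2 - 128 * Ha1 + Ha0)
      · linear_combination Hb9 + 1 * Ra + 2 * Rb - (128 * Hb8 - 1795 * Hb7 + 8837 * Hb6 - 19239 * Hb5 + 19239 * Hb4 - 8837 * Hb3 + 1795 * Hb2 - 128 * Hb1 + Hb0)
      · linear_combination Hc9 + (2/3 : ℚ) * Ra + 1 * Rc + (2/3 : ℚ) * Rd - (128 * Hc8 - 1795 * Hc7 + 8837 * Hc6 - 19239 * Hc5 + 19239 * Hc4 - 8837 * Hc3 + 1795 * Hc2 - 128 * Hc1 + Hc0)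
      · linear_combination Hd9 + 1 * Rb + (3/2 : ℚ) * Rc + 2 * Rd + (5/2 : ℚ) * Re - (128 * Hd8 - 1795 * Hd7 + 8837 * Hd6 - 19239 * Hd5 + 19239 * Hd4 - 8837 * Hd3 + 1795 * Hd2 - 128 * Hd1 + Hd0)
      · linear_combination He9 + 3 * Rc + 4 * Rd + 6 * Re - (128 * He8 - 1795 * He7 + 8837 * He6 - 19239 * He5 + 19239 * He4 - 8837 * He3 + 1795 * He2 - 128 * He1 + He0)
      · linear_combination Hf9 + (1/4 : ℚ) * Rc + 1 * Rf + (1/2 : ℚ) * Rg - (128 * Hf8 - 1795 * Hf7 + 8837 * Hf6 - 19239 * Hf5 + 19239 * Hf4 - 8837 * Hf3 + 1795 * Hf2 - 128 * Hf1 + Hf0)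
      · linear_combination Hg9 + (1/3 : ℚ) * Rd + 2 * Rf + 2 * Rg + (5/3 : ℚ) * Rh - (128 * Hg8 - 1795 * Hg7 + 8837 * Hg6 - 19239 * Hg5 + 19239 * Hg4 - 8837 * Hg3 + 1795 * Hg2 - 128 * Hg1 + Hg0)
      · linear_combination Hh9 + (1/2 : ℚ) * Re + 6 * Rf + 6 * Rg + 6 * Rh + 6 * Rk - (128 * Hh8 - 1795 * Hh7 + 8837 * Hh6 - 19239 * Hh5 + 19239 * Hh4 - 8837 * Hh3 + 1795 * Hh2 - 128 * Hh1 + Hh0)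
      · linear_combination Hk9 + 94 * Rf + 97 * Rg + 101 * Rh + 107 * Rk - (128 * Hk8 - 1795 * Hk7 + 8837 * Hk6 - 19239 * Hk5 + 19239 * Hk4 - 8837 * Hk3 + 1795 * Hk2 - 128 * Hk1 + Hk0)
      · linear_combination Hv9 + 1 * Rv - (128 * Hv8 - 1795 * Hv7 + 8837 * Hv6 - 19239 * Hv5 + 19239 * Hv4 - 8837 * Hv3 + 1795 * Hv2 - 128 * Hv1 + Hv0)
  intro n hn
  obtain ⟨Ra,Rb,Rc,Rd,Re,Rf,Rg,Rh,Rk,Rv⟩ := key (n - 9) (by omega)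
  have i1 : n - 9 + 1 = n - 8 := by omega
  have i2 : n - 9 + 2 = n - 7 := by omega
  have i3 : n - 9 + 3 = n - 6 := by omega
  have i4 : n - 9 + 4 = n - 5 := by omega
  have i5 : n - 9 + 5 = n - 4 := by omega
  have i6 : n - 9 + 6 = n - 3 := by omega
  have i7 : n - 9 + 7 = n - 2 := by omega
  have i8 : n - 9 + 8 = n - 1 := by omega
  have i9 : n - 9 + 9 = n := by omega
  rw [i1, i2, i3, i4, i5, i6, i7, i8, i9] at Ra Rb Rc Rd Re Rf Rg Rh Rk Rv
  rw [hs n, hs (n - 1), hs (n - 2), hs (n - 3), hs (n - 4), hs (n - 5), hs (n - 6), hs (n - 7), hs (n - 8), hs (n - 9)]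
  linear_combination Ra + Rb + Rc + Rd + Re + Rf + Rg + Rh + Rk
end

section
/- With the value-sum sequences â,...,k̂,v̂ of the hyperbolic Pascal simplex (integer recurrences with zero initial values except v̂(1)=4), the total ŝ(n) = â(n)+b̂(n)+ĉ(n)+d̂(n)+ê(n)+f̂(n)+ĝ(n)+ĥ(n)+k̂(n)+4 satisfies, for all n ≥ 11, ŝ(n) = 147ŝ(n-1) - 3635ŝ(n-2) + 36277ŝ(n-3) - 175292ŝ(n-4) + 445156ŝ(n-5) - 608920ŝ(n-6) + 438532ŝ(n-7) - 151320ŝ(n-8) + 19344ŝ(n-9) - 288ŝ(n-10). -/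
set_option maxHeartbeats 1000000 in
theorem stmt_11 (a b c d e f g h k v : ℕ → ℤ)
    (ha1 : a 1 = 0) (hb1 : b 1 = 0) (hc1 : c 1 = 0) (hd1 : d 1 = 0)
    (he1 : e 1 = 0) (hf1 : f 1 = 0) (hg1 : g 1 = 0) (hh1 : h 1 = 0)
    (hk1 : k 1 = 0) (hv1 : v 1 = 4)
    (ha : ∀ n ≥ 1, a (n + 1) = 2 * a n + 2 * b n + 3 * v n)
    (hb : ∀ n ≥ 1, b (n + 1) = a n + 2 * b n)
    (hc : ∀ n ≥ 1, c (n + 1) = 2 * a n + 3 * c n + 2 * d n)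
    (hd : ∀ n ≥ 1, d (n + 1) = 2 * b n + 3 * c n + 4 * d n + 5 * e n)
    (he : ∀ n ≥ 1, e (n + 1) = 3 * c n + 4 * d n + 6 * e n)
    (hf : ∀ n ≥ 1, f (n + 1) = c n + 4 * f n + 2 * g n)
    (hg : ∀ n ≥ 1, g (n + 1) = d n + 6 * f n + 6 * g n + 5 * h n)
    (hh : ∀ n ≥ 1, h (n + 1) = e n + 12 * f n + 12 * g n + 12 * h n + 12 * k n)
    (hk : ∀ n ≥ 1, k (n + 1) = 94 * f n + 97 * g n + 101 * h n + 107 * k n)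
    (hv : ∀ n ≥ 1, v (n + 1) = v n)
    (s : ℕ → ℤ)
    (hs : ∀ n, s n = a n + b n + c n + d n + e n + f n + g n + h n + k n + 4) :
    ∀ n ≥ 11,
      s n = 147 * s (n - 1) - 3635 * s (n - 2) + 36277 * s (n - 3)
        - 175292 * s (n - 4) + 445156 * s (n - 5) - 608920 * s (n - 6)
        + 438532 * s (n - 7) - 151320 * s (n - 8) + 19344 * s (n - 9)
        - 288 * s (n - 10) := by
  have key : ∀ n ≥ 1,
      s (n+10) = 147 * s (n+9) - 3635 * s (n+8) + 36277 * s (n+7)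
        - 175292 * s (n+6) + 445156 * s (n+5) - 608920 * s (n+4)
        + 438532 * s (n+3) - 151320 * s (n+2) + 19344 * s (n+1)
        - 288 * s n := by
    intro n hn
    have Ha0 : a (n+1) = 2 * a n + 2 * b n + 3 * v n := ha n (by omega)
    have Hb0 : b (n+1) = a n + 2 * b n := hb n (by omega)
    have Hc0 : c (n+1) = 2 * a n + 3 * c n + 2 * d n := hc n (by omega)
    have Hd0 : d (n+1) = 2 * b n + 3 * c n + 4 * d n + 5 * e n := hd n (by omega)
    have He0 : e (n+1) = 3 * c n + 4 * d n + 6 * e n := he n (by omega)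
    have Hh0 : h (n+1) = e n + 12 * f n + 12 * g n + 12 * h n + 12 * k n := hh n (by omega)
    have Hv0 : v (n+1) = v n := hv n (by omega)
    have Ha1 : a (n+2) = 2 * a (n+1) + 2 * b (n+1) + 3 * v (n+1) := ha (n+1) (by omega)
    have Hb1 : b (n+2) = a (n+1) + 2 * b (n+1) := hb (n+1) (by omega)
    have Hc1 : c (n+2) = 2 * a (n+1) + 3 * c (n+1) + 2 * d (n+1) := hc (n+1) (by omega)
    have Hd1 : d (n+2) = 2 * b (n+1) + 3 * c (n+1) + 4 * d (n+1) + 5 * e (n+1) := hd (n+1) (by omega)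
    have He1 : e (n+2) = 3 * c (n+1) + 4 * d (n+1) + 6 * e (n+1) := he (n+1) (by omega)
    have Hf1 : f (n+2) = c (n+1) + 4 * f (n+1) + 2 * g (n+1) := hf (n+1) (by omega)
    have Hg1 : g (n+2) = d (n+1) + 6 * f (n+1) + 6 * g (n+1) + 5 * h (n+1) := hg (n+1) (by omega)
    have Hh1 : h (n+2) = e (n+1) + 12 * f (n+1) + 12 * g (n+1) + 12 * h (n+1) + 12 * k (n+1) := hh (n+1) (by omega)
    have Hk1 : k (n+2) = 94 * f (n+1) + 97 * g (n+1) + 101 * h (n+1) + 107 * k (n+1) := hk (n+1) (by omega)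
    have Hv1 : v (n+2) = v (n+1) := hv (n+1) (by omega)
    have Ha2 : a (n+3) = 2 * a (n+2) + 2 * b (n+2) + 3 * v (n+2) := ha (n+2) (by omega)
    have Hb2 : b (n+3) = a (n+2) + 2 * b (n+2) := hb (n+2) (by omega)
    have Hc2 : c (n+3) = 2 * a (n+2) + 3 * c (n+2) + 2 * d (n+2) := hc (n+2) (by omega)
    have Hd2 : d (n+3) = 2 * b (n+2) + 3 * c (n+2) + 4 * d (n+2) + 5 * e (n+2) := hd (n+2) (by omega)
    have He2 : e (n+3) = 3 * c (n+2) + 4 * d (n+2) + 6 * e (n+2) := he (n+2) (by omega)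
    have Hf2 : f (n+3) = c (n+2) + 4 * f (n+2) + 2 * g (n+2) := hf (n+2) (by omega)
    have Hg2 : g (n+3) = d (n+2) + 6 * f (n+2) + 6 * g (n+2) + 5 * h (n+2) := hg (n+2) (by omega)
    have Hh2 : h (n+3) = e (n+2) + 12 * f (n+2) + 12 * g (n+2) + 12 * h (n+2) + 12 * k (n+2) := hh (n+2) (by omega)
    have Hk2 : k (n+3) = 94 * f (n+2) + 97 * g (n+2) + 101 * h (n+2) + 107 * k (n+2) := hk (n+2) (by omega)
    have Hv2 : v (n+3) = v (n+2) := hv (n+2) (by omega)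
    have Ha3 : a (n+4) = 2 * a (n+3) + 2 * b (n+3) + 3 * v (n+3) := ha (n+3) (by omega)
    have Hb3 : b (n+4) = a (n+3) + 2 * b (n+3) := hb (n+3) (by omega)
    have Hc3 : c (n+4) = 2 * a (n+3) + 3 * c (n+3) + 2 * d (n+3) := hc (n+3) (by omega)
    have Hd3 : d (n+4) = 2 * b (n+3) + 3 * c (n+3) + 4 * d (n+3) + 5 * e (n+3) := hd (n+3) (by omega)
    have He3 : e (n+4) = 3 * c (n+3) + 4 * d (n+3) + 6 * e (n+3) := he (n+3) (by omega)
    have Hf3 : f (n+4) = c (n+3) + 4 * f (n+3) + 2 * g (n+3) := hf (n+3) (by omega)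
    have Hg3 : g (n+4) = d (n+3) + 6 * f (n+3) + 6 * g (n+3) + 5 * h (n+3) := hg (n+3) (by omega)
    have Hh3 : h (n+4) = e (n+3) + 12 * f (n+3) + 12 * g (n+3) + 12 * h (n+3) + 12 * k (n+3) := hh (n+3) (by omega)
    have Hk3 : k (n+4) = 94 * f (n+3) + 97 * g (n+3) + 101 * h (n+3) + 107 * k (n+3) := hk (n+3) (by omega)
    have Hv3 : v (n+4) = v (n+3) := hv (n+3) (by omega)
    have Ha4 : a (n+5) = 2 * a (n+4) + 2 * b (n+4) + 3 * v (n+4) := ha (n+4) (by omega)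
    have Hb4 : b (n+5) = a (n+4) + 2 * b (n+4) := hb (n+4) (by omega)
    have Hc4 : c (n+5) = 2 * a (n+4) + 3 * c (n+4) + 2 * d (n+4) := hc (n+4) (by omega)
    have Hd4 : d (n+5) = 2 * b (n+4) + 3 * c (n+4) + 4 * d (n+4) + 5 * e (n+4) := hd (n+4) (by omega)
    have He4 : e (n+5) = 3 * c (n+4) + 4 * d (n+4) + 6 * e (n+4) := he (n+4) (by omega)
    have Hf4 : f (n+5) = c (n+4) + 4 * f (n+4) + 2 * g (n+4) := hf (n+4) (by omega)
    have Hg4 : g (n+5) = d (n+4) + 6 * f (n+4) + 6 * g (n+4) + 5 * h (n+4) := hg (n+4) (by omega)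
    have Hh4 : h (n+5) = e (n+4) + 12 * f (n+4) + 12 * g (n+4) + 12 * h (n+4) + 12 * k (n+4) := hh (n+4) (by omega)
    have Hk4 : k (n+5) = 94 * f (n+4) + 97 * g (n+4) + 101 * h (n+4) + 107 * k (n+4) := hk (n+4) (by omega)
    have Hv4 : v (n+5) = v (n+4) := hv (n+4) (by omega)
    have Ha5 : a (n+6) = 2 * a (n+5) + 2 * b (n+5) + 3 * v (n+5) := ha (n+5) (by omega)
    have Hb5 : b (n+6) = a (n+5) + 2 * b (n+5) := hb (n+5) (by omega)
    have Hc5 : c (n+6) = 2 * a (n+5) + 3 * c (n+5) + 2 * d (n+5) := hc (n+5) (by omega)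
    have Hd5 : d (n+6) = 2 * b (n+5) + 3 * c (n+5) + 4 * d (n+5) + 5 * e (n+5) := hd (n+5) (by omega)
    have He5 : e (n+6) = 3 * c (n+5) + 4 * d (n+5) + 6 * e (n+5) := he (n+5) (by omega)
    have Hf5 : f (n+6) = c (n+5) + 4 * f (n+5) + 2 * g (n+5) := hf (n+5) (by omega)
    have Hg5 : g (n+6) = d (n+5) + 6 * f (n+5) + 6 * g (n+5) + 5 * h (n+5) := hg (n+5) (by omega)
    have Hh5 : h (n+6) = e (n+5) + 12 * f (n+5) + 12 * g (n+5) + 12 * h (n+5) + 12 * k (n+5) := hh (n+5) (by omega)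
    have Hk5 : k (n+6) = 94 * f (n+5) + 97 * g (n+5) + 101 * h (n+5) + 107 * k (n+5) := hk (n+5) (by omega)
    have Hv5 : v (n+6) = v (n+5) := hv (n+5) (by omega)
    have Ha6 : a (n+7) = 2 * a (n+6) + 2 * b (n+6) + 3 * v (n+6) := ha (n+6) (by omega)
    have Hb6 : b (n+7) = a (n+6) + 2 * b (n+6) := hb (n+6) (by omega)
    have Hc6 : c (n+7) = 2 * a (n+6) + 3 * c (n+6) + 2 * d (n+6) := hc (n+6) (by omega)
    have Hd6 : d (n+7) = 2 * b (n+6) + 3 * c (n+6) + 4 * d (n+6) + 5 * e (n+6) := hd (n+6) (by omega)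
    have He6 : e (n+7) = 3 * c (n+6) + 4 * d (n+6) + 6 * e (n+6) := he (n+6) (by omega)
    have Hf6 : f (n+7) = c (n+6) + 4 * f (n+6) + 2 * g (n+6) := hf (n+6) (by omega)
    have Hg6 : g (n+7) = d (n+6) + 6 * f (n+6) + 6 * g (n+6) + 5 * h (n+6) := hg (n+6) (by omega)
    have Hh6 : h (n+7) = e (n+6) + 12 * f (n+6) + 12 * g (n+6) + 12 * h (n+6) + 12 * k (n+6) := hh (n+6) (by omega)
    have Hk6 : k (n+7) = 94 * f (n+6) + 97 * g (n+6) + 101 * h (n+6) + 107 * k (n+6) := hk (n+6) (by omega)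
    have Hv6 : v (n+7) = v (n+6) := hv (n+6) (by omega)
    have Ha7 : a (n+8) = 2 * a (n+7) + 2 * b (n+7) + 3 * v (n+7) := ha (n+7) (by omega)
    have Hb7 : b (n+8) = a (n+7) + 2 * b (n+7) := hb (n+7) (by omega)
    have Hc7 : c (n+8) = 2 * a (n+7) + 3 * c (n+7) + 2 * d (n+7) := hc (n+7) (by omega)
    have Hd7 : d (n+8) = 2 * b (n+7) + 3 * c (n+7) + 4 * d (n+7) + 5 * e (n+7) := hd (n+7) (by omega)
    have He7 : e (n+8) = 3 * c (n+7) + 4 * d (n+7) + 6 * e (n+7) := he (n+7) (by omega)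
    have Hf7 : f (n+8) = c (n+7) + 4 * f (n+7) + 2 * g (n+7) := hf (n+7) (by omega)
    have Hg7 : g (n+8) = d (n+7) + 6 * f (n+7) + 6 * g (n+7) + 5 * h (n+7) := hg (n+7) (by omega)
    have Hh7 : h (n+8) = e (n+7) + 12 * f (n+7) + 12 * g (n+7) + 12 * h (n+7) + 12 * k (n+7) := hh (n+7) (by omega)
    have Hk7 : k (n+8) = 94 * f (n+7) + 97 * g (n+7) + 101 * h (n+7) + 107 * k (n+7) := hk (n+7) (by omega)
    have Hv7 : v (n+8) = v (n+7) := hv (n+7) (by omega)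
    have Ha8 : a (n+9) = 2 * a (n+8) + 2 * b (n+8) + 3 * v (n+8) := ha (n+8) (by omega)
    have Hb8 : b (n+9) = a (n+8) + 2 * b (n+8) := hb (n+8) (by omega)
    have Hc8 : c (n+9) = 2 * a (n+8) + 3 * c (n+8) + 2 * d (n+8) := hc (n+8) (by omega)
    have Hd8 : d (n+9) = 2 * b (n+8) + 3 * c (n+8) + 4 * d (n+8) + 5 * e (n+8) := hd (n+8) (by omega)
    have He8 : e (n+9) = 3 * c (n+8) + 4 * d (n+8) + 6 * e (n+8) := he (n+8) (by omega)
    have Hf8 : f (n+9) = c (n+8) + 4 * f (n+8) + 2 * g (n+8) := hf (n+8) (by omega)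
    have Hg8 : g (n+9) = d (n+8) + 6 * f (n+8) + 6 * g (n+8) + 5 * h (n+8) := hg (n+8) (by omega)
    have Hh8 : h (n+9) = e (n+8) + 12 * f (n+8) + 12 * g (n+8) + 12 * h (n+8) + 12 * k (n+8) := hh (n+8) (by omega)
    have Hk8 : k (n+9) = 94 * f (n+8) + 97 * g (n+8) + 101 * h (n+8) + 107 * k (n+8) := hk (n+8) (by omega)
    have Hv8 : v (n+9) = v (n+8) := hv (n+8) (by omega)
    have Ha9 : a (n+10) = 2 * a (n+9) + 2 * b (n+9) + 3 * v (n+9) := ha (n+9) (by omega)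
    have Hb9 : b (n+10) = a (n+9) + 2 * b (n+9) := hb (n+9) (by omega)
    have Hc9 : c (n+10) = 2 * a (n+9) + 3 * c (n+9) + 2 * d (n+9) := hc (n+9) (by omega)
    have Hd9 : d (n+10) = 2 * b (n+9) + 3 * c (n+9) + 4 * d (n+9) + 5 * e (n+9) := hd (n+9) (by omega)
    have He9 : e (n+10) = 3 * c (n+9) + 4 * d (n+9) + 6 * e (n+9) := he (n+9) (by omega)
    have Hf9 : f (n+10) = c (n+9) + 4 * f (n+9) + 2 * g (n+9) := hf (n+9) (by omega)
    have Hg9 : g (n+10) = d (n+9) + 6 * f (n+9) + 6 * g (n+9) + 5 * h (n+9) := hg (n+9) (by omega)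
    have Hh9 : h (n+10) = e (n+9) + 12 * f (n+9) + 12 * g (n+9) + 12 * h (n+9) + 12 * k (n+9) := hh (n+9) (by omega)
    have Hk9 : k (n+10) = 94 * f (n+9) + 97 * g (n+9) + 101 * h (n+9) + 107 * k (n+9) := hk (n+9) (by omega)
    linear_combination
        hs (n+10) +
        (-147:ℤ) * hs (n+9) +
        (3635:ℤ) * hs (n+8) +
        (-36277:ℤ) * hs (n+7) +
        (175292:ℤ) * hs (n+6) +
        (-445156:ℤ) * hs (n+5) +
        (608920:ℤ) * hs (n+4) +
        (-438532:ℤ) * hs (n+3) +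
        (151320:ℤ) * hs (n+2) +
        (-19344:ℤ) * hs (n+1) +
        (288:ℤ) * hs n +
        Ha9 +
        Hb9 +
        Hc9 +
        Hd9 +
        He9 +
        Hf9 +
        Hg9 +
        Hh9 +
        Hk9 +
        (-142:ℤ) * Ha8 +
        (-141:ℤ) * Hb8 +
        (-137:ℤ) * Hc8 +
        (-136:ℤ) * Hd8 +
        (-135:ℤ) * He8 +
        (-31:ℤ) * Hf8 +
        (-30:ℤ) * Hg8 +
        (-29:ℤ) * Hh8 +
        (-28:ℤ) * Hk8 +
        (3:ℤ) * Hv8 +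
        (2936:ℤ) * Ha7 +
        (2797:ℤ) * Hb7 +
        (2380:ℤ) * Hc7 +
        (2247:ℤ) * Hd7 +
        (2116:ℤ) * He7 +
        (351:ℤ) * Hf7 +
        (329:ℤ) * Hg7 +
        (309:ℤ) * Hh7 +
        (291:ℤ) * Hk7 +
        (-423:ℤ) * Hv7 +
        (-22848:ℤ) * Ha6 +
        (-20317:ℤ) * Hb6 +
        (-15697:ℤ) * Hc6 +
        (-13736:ℤ) * Hd6 +
        (-12037:ℤ) * He6 +
        (-1837:ℤ) * Hf6 +
        (-1666:ℤ) * Hg6 +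
        (-1533:ℤ) * Hh6 +
        (-1432:ℤ) * Hk6 +
        (8385:ℤ) * Hv6 +
        (77885:ℤ) * Ha5 +
        (61490:ℤ) * Hb5 +
        (49045:ℤ) * Hc5 +
        (39140:ℤ) * Hd5 +
        (32857:ℤ) * He5 +
        (4944:ℤ) * Hf5 +
        (4322:ℤ) * Hg5 +
        (3934:ℤ) * Hh5 +
        (3672:ℤ) * Hk5 +
        (-60159:ℤ) * Hv5 +
        (-129806:ℤ) * Ha4 +
        (-88126:ℤ) * Hb4 +
        (-77086:ℤ) * Hc4 +
        (-54756:ℤ) * Hd4 +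
        (-48380:ℤ) * He4 +
        (-7072:ℤ) * Hf4 +
        (-5944:ℤ) * Hg4 +
        (-5466:ℤ) * Hh4 +
        (-5044:ℤ) * Hk4 +
        (173496:ℤ) * Hv4 +
        (107010:ℤ) * Ha3 +
        (63544:ℤ) * Hb3 +
        (61182:ℤ) * Hc3 +
        (36260:ℤ) * Hd3 +
        (39394:ℤ) * He3 +
        (5240:ℤ) * Hf3 +
        (4252:ℤ) * Hg3 +
        (4164:ℤ) * Hh3 +
        (3620:ℤ) * Hk3 +
        (-215922:ℤ) * Hv3 +
        (-38604:ℤ) * Ha2 +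
        (-24904:ℤ) * Hb2 +
        (-22784:ℤ) * Hc2 +
        (-9300:ℤ) * Hd2 +
        (-16704:ℤ) * He2 +
        (-1812:ℤ) * Hf2 +
        (-1432:ℤ) * Hg2 +
        (-1684:ℤ) * Hh2 +
        (-1224:ℤ) * Hk2 +
        (105108:ℤ) * Hv2 +
        (3640:ℤ) * Ha1 +
        (5704:ℤ) * Hb1 +
        (3144:ℤ) * Hc1 +
        (304:ℤ) * Hd1 +
        (2912:ℤ) * He1 +
        (216:ℤ) * Hf1 +
        (168:ℤ) * Hg1 +
        (328:ℤ) * Hh1 +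
        (144:ℤ) * Hk1 +
        (-10704:ℤ) * Hv1 +
        (-72:ℤ) * Ha0 +
        (-48:ℤ) * Hb0 +
        (-48:ℤ) * Hc0 +
        (-24:ℤ) * Hd0 +
        (-24:ℤ) * He0 +
        (-24:ℤ) * Hh0 +
        (216:ℤ) * Hv0
  intro n hn
  obtain ⟨m, rfl⟩ : ∃ m, n = m + 10 := ⟨n - 10, by omega⟩
  have e1 : m + 10 - 1 = m + 9 := by omega
  have e2 : m + 10 - 2 = m + 8 := by omega
  have e3 : m + 10 - 3 = m + 7 := by omega
  have e4 : m + 10 - 4 = m + 6 := by omega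
  have e5 : m + 10 - 5 = m + 5 := by omega
  have e6 : m + 10 - 6 = m + 4 := by omega
  have e7 : m + 10 - 7 = m + 3 := by omega
  have e8 : m + 10 - 8 = m + 2 := by omega
  have e9 : m + 10 - 9 = m + 1 := by omega
  have e10 : m + 10 - 10 = m := by omega
  rw [e1, e2, e3, e4, e5, e6, e7, e8, e9, e10]
  exact key m (by omega)
end

section
/- With the value-sum sequences â,...,ê of types A–E in the hyperbolic Pascal simplex, each of â,b̂,ĉ,d̂,ê satisfies, for all n ≥ 7, x(n) = 18x(n-1) - 99x(n-2) + 226x(n-3) - 224x(n-4) + 92x(n-5) - 12x(n-6). -/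
theorem stmt_12 (a b c d e v : ℕ → ℤ)
    (ha1 : a 1 = 0) (hb1 : b 1 = 0) (hc1 : c 1 = 0) (hd1 : d 1 = 0)
    (he1 : e 1 = 0) (hv1 : v 1 = 4)
    (ha : ∀ n ≥ 1, a (n + 1) = 2 * a n + 2 * b n + 3 * v n)
    (hb : ∀ n ≥ 1, b (n + 1) = a n + 2 * b n)
    (hc : ∀ n ≥ 1, c (n + 1) = 2 * a n + 3 * c n + 2 * d n)
    (hd : ∀ n ≥ 1, d (n + 1) = 2 * b n + 3 * c n + 4 * d n + 5 * e n)
    (he : ∀ n ≥ 1, e (n + 1) = 3 * c n + 4 * d n + 6 * e n)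
    (hv : ∀ n ≥ 1, v (n + 1) = v n) :
    ∀ x ∈ ({a, b, c, d, e} : Set (ℕ → ℤ)), ∀ n ≥ 7,
      x n = 18 * x (n - 1) - 99 * x (n - 2) + 226 * x (n - 3)
            - 224 * x (n - 4) + 92 * x (n - 5) - 12 * x (n - 6) := by
  have key : ∀ n, 1 ≤ n → ∀ x ∈ ({a, b, c, d, e} : Set (ℕ → ℤ)),
      x (n + 6) = 18 * x (n + 5) - 99 * x (n + 4) + 226 * x (n + 3)
            - 224 * x (n + 2) + 92 * x (n + 1) - 12 * x n := by
    intro n hn x hx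
    have ha0 : a (n + 1) = 2 * a n + 2 * b n + 3 * v n := ha n (by omega)
    have ha1 : a (n + 2) = 2 * a (n + 1) + 2 * b (n + 1) + 3 * v (n + 1) := ha (n + 1) (by omega)
    have ha2 : a (n + 3) = 2 * a (n + 2) + 2 * b (n + 2) + 3 * v (n + 2) := ha (n + 2) (by omega)
    have ha3 : a (n + 4) = 2 * a (n + 3) + 2 * b (n + 3) + 3 * v (n + 3) := ha (n + 3) (by omega)
    have ha4 : a (n + 5) = 2 * a (n + 4) + 2 * b (n + 4) + 3 * v (n + 4) := ha (n + 4) (by omega)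
    have ha5 : a (n + 6) = 2 * a (n + 5) + 2 * b (n + 5) + 3 * v (n + 5) := ha (n + 5) (by omega)
    have hb0 : b (n + 1) = a n + 2 * b n := hb n (by omega)
    have hb1 : b (n + 2) = a (n + 1) + 2 * b (n + 1) := hb (n + 1) (by omega)
    have hb2 : b (n + 3) = a (n + 2) + 2 * b (n + 2) := hb (n + 2) (by omega)
    have hb3 : b (n + 4) = a (n + 3) + 2 * b (n + 3) := hb (n + 3) (by omega)
    have hb4 : b (n + 5) = a (n + 4) + 2 * b (n + 4) := hb (n + 4) (by omega)
    have hb5 : b (n + 6) = a (n + 5) + 2 * b (n + 5) := hb (n + 5) (by omega)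
    have hc0 : c (n + 1) = 2 * a n + 3 * c n + 2 * d n := hc n (by omega)
    have hc1 : c (n + 2) = 2 * a (n + 1) + 3 * c (n + 1) + 2 * d (n + 1) := hc (n + 1) (by omega)
    have hc2 : c (n + 3) = 2 * a (n + 2) + 3 * c (n + 2) + 2 * d (n + 2) := hc (n + 2) (by omega)
    have hc3 : c (n + 4) = 2 * a (n + 3) + 3 * c (n + 3) + 2 * d (n + 3) := hc (n + 3) (by omega)
    have hc4 : c (n + 5) = 2 * a (n + 4) + 3 * c (n + 4) + 2 * d (n + 4) := hc (n + 4) (by omega)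
    have hc5 : c (n + 6) = 2 * a (n + 5) + 3 * c (n + 5) + 2 * d (n + 5) := hc (n + 5) (by omega)
    have hd0 : d (n + 1) = 2 * b n + 3 * c n + 4 * d n + 5 * e n := hd n (by omega)
    have hd1 : d (n + 2) = 2 * b (n + 1) + 3 * c (n + 1) + 4 * d (n + 1) + 5 * e (n + 1) := hd (n + 1) (by omega)
    have hd2 : d (n + 3) = 2 * b (n + 2) + 3 * c (n + 2) + 4 * d (n + 2) + 5 * e (n + 2) := hd (n + 2) (by omega)
    have hd3 : d (n + 4) = 2 * b (n + 3) + 3 * c (n + 3) + 4 * d (n + 3) + 5 * e (n + 3) := hd (n + 3) (by omega)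
    have hd4 : d (n + 5) = 2 * b (n + 4) + 3 * c (n + 4) + 4 * d (n + 4) + 5 * e (n + 4) := hd (n + 4) (by omega)
    have hd5 : d (n + 6) = 2 * b (n + 5) + 3 * c (n + 5) + 4 * d (n + 5) + 5 * e (n + 5) := hd (n + 5) (by omega)
    have he0 : e (n + 1) = 3 * c n + 4 * d n + 6 * e n := he n (by omega)
    have he1 : e (n + 2) = 3 * c (n + 1) + 4 * d (n + 1) + 6 * e (n + 1) := he (n + 1) (by omega)
    have he2 : e (n + 3) = 3 * c (n + 2) + 4 * d (n + 2) + 6 * e (n + 2) := he (n + 2) (by omega)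
    have he3 : e (n + 4) = 3 * c (n + 3) + 4 * d (n + 3) + 6 * e (n + 3) := he (n + 3) (by omega)
    have he4 : e (n + 5) = 3 * c (n + 4) + 4 * d (n + 4) + 6 * e (n + 4) := he (n + 4) (by omega)
    have he5 : e (n + 6) = 3 * c (n + 5) + 4 * d (n + 5) + 6 * e (n + 5) := he (n + 5) (by omega)
    have hv0 : v (n + 1) = v n := hv n (by omega)
    have hv1 : v (n + 2) = v (n + 1) := hv (n + 1) (by omega)
    have hv2 : v (n + 3) = v (n + 2) := hv (n + 2) (by omega)
    have hv3 : v (n + 4) = v (n + 3) := hv (n + 3) (by omega)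
    have hv4 : v (n + 5) = v (n + 4) := hv (n + 4) (by omega)
    have hv5 : v (n + 6) = v (n + 5) := hv (n + 5) (by omega)

    simp only [Set.mem_insert_iff, Set.mem_singleton_iff] at hx
    rcases hx with rfl | rfl | rfl | rfl | rfl <;> linarith
  intro x hx n hn
  obtain ⟨m, rfl⟩ : ∃ m, n = m + 6 := ⟨n - 6, by omega⟩
  simp only [show m + 6 - 1 = m + 5 from by omega, show m + 6 - 2 = m + 4 from by omega,
    show m + 6 - 3 = m + 3 from by omega, show m + 6 - 4 = m + 2 from by omega,
    show m + 6 - 5 = m + 1 from by omega, show m + 6 - 6 = m from by omega]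
  exact key m (by omega) x hx
end

section
/- If sequences c,d,e : ℕ → ℚ together with a,b,v satisfy the closed subsystem a(n+1)=a(n)+b(n)+(3/2)v(n), b(n+1)=a(n)+2b(n), c(n+1)=(2a(n)+3c(n)+2d(n))/3, d(n+1)=(2b(n)+3c(n)+4d(n)+5e(n))/2, e(n+1)=3c(n)+4d(n)+6e(n), v(n+1)=v(n), then for every vector (a(1),b(1),c(1),d(1),e(1),v(1)) the sequence y(n) = c(n)+d(n)+e(n) satisfies y(n) = 12y(n-1) - 37y(n-2) + 37y(n-3) - 12y(n-4) + y(n-5) for all n ≥ 6. -/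
theorem stmt_18 (a b c d e v : ℕ → ℚ)
    (ha : ∀ n, a (n + 1) = a n + b n + (3/2) * v n)
    (hb : ∀ n, b (n + 1) = a n + 2 * b n)
    (hc : ∀ n, c (n + 1) = (2 * a n + 3 * c n + 2 * d n) / 3)
    (hd : ∀ n, d (n + 1) = (2 * b n + 3 * c n + 4 * d n + 5 * e n) / 2)
    (he : ∀ n, e (n + 1) = 3 * c n + 4 * d n + 6 * e n)
    (hv : ∀ n, v (n + 1) = v n)
    (y : ℕ → ℚ) (hy : ∀ n, y n = c n + d n + e n) :
    ∀ n ≥ 6,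
      y n = 12 * y (n - 1) - 37 * y (n - 2) + 37 * y (n - 3)
        - 12 * y (n - 4) + y (n - 5) := by
  intro n hn
  obtain ⟨m, rfl⟩ : ∃ m, n = m + 6 := ⟨n - 6, by omega⟩
  have s1 : m + 6 - 1 = m + 5 := by omega
  have s2 : m + 6 - 2 = m + 4 := by omega
  have s3 : m + 6 - 3 = m + 3 := by omega
  have s4 : m + 6 - 4 = m + 2 := by omega
  have s5 : m + 6 - 5 = m + 1 := by omega
  rw [s1, s2, s3, s4, s5]
  simp only [show m + 6 = m + 5 + 1 from rfl, show m + 5 = m + 4 + 1 from rfl,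
    show m + 4 = m + 3 + 1 from rfl, show m + 3 = m + 2 + 1 from rfl,
    show m + 2 = m + 1 + 1 from rfl, hy, ha, hb, hc, hd, he, hv]
  ring
end
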